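/- arXiv:0706.3162 — 2 statements merged into one kernel-verified Lean document; each statement's English description precedes it below -/
import Mathlib

section
/- Let 0 < α < 1 and 0 < p < 1. Define g_{α,p}(t) = (sin(απ)/π) · (1−p) t^α / [p²(1−t)^{2α} + (1−p)² t^{2α} + 2p(1−p) t^α (1−t)^α cos(απ)] for 0 < t < 1, and G_{α,p}(x) = ∫₀ˣ (x−t)^{α−1} g_{α,p}(t) dt for 0 ≤ x ≤ 1. Then G_{α,p} is infinitely differentiable on the open interval (0,1). -/
open MeasureTheory Real Set Filter

/-- The density `g_{α,p}` from Yano--Yano. -/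
noncomputable def gDens (α p t : ℝ) : ℝ :=
  (Real.sin (α * Real.pi) / Real.pi) * ((1 - p) * t ^ α) /
    (p ^ 2 * (1 - t) ^ (2 * α) + (1 - p) ^ 2 * t ^ (2 * α)
      + 2 * p * (1 - p) * t ^ α * (1 - t) ^ α * Real.cos (α * Real.pi))

/-- The distribution function `G_{α,p}`. -/
noncomputable def GDist (α p x : ℝ) : ℝ :=
  ∫ t in (0:ℝ)..x, (x - t) ^ (α - 1) * gDens α p t

section aux

variable {α p : ℝ}

lemma cont_rpow {c : ℝ} (hc : 0 < c) : Continuous fun t : ℝ => t ^ c := by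
  rw [continuous_iff_continuousAt]
  intro t
  exact Real.continuousAt_rpow_const t c (Or.inr hc.le)

lemma gDen_pos (hα0 : 0 < α) (hα1 : α < 1) (hp0 : 0 < p) (hp1 : p < 1)
    {t : ℝ} (ht0 : 0 ≤ t) (ht1 : t < 1) :
    0 < p ^ 2 * (1 - t) ^ (2 * α) + (1 - p) ^ 2 * t ^ (2 * α)
      + 2 * p * (1 - p) * t ^ α * (1 - t) ^ α * Real.cos (α * Real.pi) := by
  have hs : 0 < Real.sin (α * Real.pi) :=
    Real.sin_pos_of_pos_of_lt_pi (by positivity) (by nlinarith [Real.pi_pos])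
  have hy : (0:ℝ) ≤ t ^ α := Real.rpow_nonneg ht0 α
  have hz : (0:ℝ) < (1 - t) ^ α := Real.rpow_pos_of_pos (by linarith) α
  have e1 : t ^ (2 * α) = (t ^ α) ^ 2 := by
    rw [show (2:ℝ) * α = α * 2 by ring, Real.rpow_mul ht0,
      show ((2:ℝ)) = ((2:ℕ):ℝ) by norm_num, Real.rpow_natCast]
  have e2 : (1 - t) ^ (2 * α) = ((1 - t) ^ α) ^ 2 := by
    rw [show (2:ℝ) * α = α * 2 by ring, Real.rpow_mul (by linarith : (0:ℝ) ≤ 1 - t),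
      show ((2:ℝ)) = ((2:ℕ):ℝ) by norm_num, Real.rpow_natCast]
  rw [e1, e2]
  have key : Real.sin (α * Real.pi) ^ 2 + Real.cos (α * Real.pi) ^ 2 = 1 :=
    Real.sin_sq_add_cos_sq _
  have identity : p ^ 2 * ((1 - t) ^ α) ^ 2 + (1 - p) ^ 2 * (t ^ α) ^ 2
      + 2 * p * (1 - p) * t ^ α * (1 - t) ^ α * Real.cos (α * Real.pi)
      = (p * (1 - t) ^ α * Real.cos (α * Real.pi) + (1 - p) * t ^ α) ^ 2
        + (p * (1 - t) ^ α * Real.sin (α * Real.pi)) ^ 2 := by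
    linear_combination (-(p * (1 - t) ^ α) ^ 2) * key
  rw [identity]
  have h1 : 0 < (p * (1 - t) ^ α * Real.sin (α * Real.pi)) ^ 2 :=
    pow_pos (mul_pos (mul_pos hp0 hz) hs) 2
  have h2 : 0 ≤ (p * (1 - t) ^ α * Real.cos (α * Real.pi) + (1 - p) * t ^ α) ^ 2 :=
    sq_nonneg _
  linarith

lemma gDens_continuousOn (hα0 : 0 < α) (hα1 : α < 1) (hp0 : 0 < p) (hp1 : p < 1) :
    ContinuousOn (gDens α p) (Ico 0 1) := by
  have c1 : Continuous fun t : ℝ => t ^ α := cont_rpow hα0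
  have c2 : Continuous fun t : ℝ => (1 - t) ^ α :=
    (cont_rpow hα0).comp (continuous_const.sub continuous_id)
  have c3 : Continuous fun t : ℝ => t ^ (2 * α) := cont_rpow (by linarith)
  have c4 : Continuous fun t : ℝ => (1 - t) ^ (2 * α) :=
    (cont_rpow (by linarith)).comp (continuous_const.sub continuous_id)
  unfold gDens
  apply ContinuousOn.div
  · exact (continuous_const.mul (continuous_const.mul c1)).continuousOn
  · exact (((continuous_const.mul c4).add (continuous_const.mul c3)).add
      (((continuous_const.mul c1).mul c2).mul continuous_const)).continuousOn
  · intro t ht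
    exact (gDen_pos hα0 hα1 hp0 hp1 ht.1 ht.2).ne'

lemma gDens_smooth (hα0 : 0 < α) (hα1 : α < 1) (hp0 : 0 < p) (hp1 : p < 1) :
    ContDiffOn ℝ (⊤ : ℕ∞) (gDens α p) (Ioo 0 1) := by
  intro t ht
  have h0 : t ≠ 0 := ne_of_gt ht.1
  have h1 : (1:ℝ) - t ≠ 0 := ne_of_gt (by linarith [ht.2])
  have crp : ∀ q : ℝ, ContDiffAt ℝ (⊤ : ℕ∞) (fun s : ℝ => s ^ q) t := fun q =>
    Real.contDiffAt_rpow_const_of_ne h0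
  have crm : ∀ q : ℝ, ContDiffAt ℝ (⊤ : ℕ∞) (fun s : ℝ => (1 - s) ^ q) t := fun q =>
    (Real.contDiffAt_rpow_const_of_ne (x := 1 - t) h1).comp t
      (contDiffAt_const.sub contDiffAt_id)
  apply ContDiffAt.contDiffWithinAt
  apply ContDiffAt.div
  · exact contDiffAt_const.mul (contDiffAt_const.mul (crp α))
  · exact ((contDiffAt_const.mul (crm (2 * α))).add
      (contDiffAt_const.mul (crp (2 * α)))).add
      (((contDiffAt_const.mul (crp α)).mul (crm α)).mul contDiffAt_const)
  · exact (gDen_pos hα0 hα1 hp0 hp1 ht.1.le ht.2).ne'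

end aux


section aux2
variable {α p : ℝ}

/-- Iterated derivatives of `gDens`. -/
noncomputable def dg (α p : ℝ) : ℕ → ℝ → ℝ
  | 0 => gDens α p
  | n + 1 => deriv (dg α p n)

lemma dg_smooth (hα0 : 0 < α) (hα1 : α < 1) (hp0 : 0 < p) (hp1 : p < 1) (n : ℕ) :
    ContDiffOn ℝ (⊤ : ℕ∞) (dg α p n) (Ioo 0 1) := by
  induction n with
  | zero => exact gDens_smooth hα0 hα1 hp0 hp1
  | succ n ih => exact ih.deriv_of_isOpen isOpen_Ioo (le_of_eq rfl)

lemma dg_hasDerivAt (hα0 : 0 < α) (hα1 : α < 1) (hp0 : 0 < p) (hp1 : p < 1) (n : ℕ)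
    {t : ℝ} (ht : t ∈ Ioo (0:ℝ) 1) : HasDerivAt (dg α p n) (dg α p (n + 1) t) t := by
  have h1 : DifferentiableAt ℝ (dg α p n) t := by
    have := (dg_smooth hα0 hα1 hp0 hp1 n).differentiableOn
      (by simp)
    exact this.differentiableAt (isOpen_Ioo.mem_nhds ht)
  exact h1.hasDerivAt

/-- From an infinite ladder of derivatives, conclude `C^∞`. -/
lemma contDiffOn_of_hasDerivAt_chain {I : ℕ → ℝ → ℝ} {s : Set ℝ} (hs : IsOpen s)
    (h : ∀ n, ∀ x ∈ s, HasDerivAt (I n) (I (n + 1) x) x) :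
    ContDiffOn ℝ (⊤ : ℕ∞) (I 0) s := by
  suffices H : ∀ m n : ℕ, ContDiffOn ℝ m (I n) s by
    exact contDiffOn_infty.2 fun m => H m 0
  intro m
  induction m with
  | zero =>
    intro n
    simp only [Nat.cast_zero]
    rw [contDiffOn_zero]
    exact fun x hx => (h n x hx).continuousAt.continuousWithinAt
  | succ m ih =>
    intro n
    have hcast : ((m + 1 : ℕ) : WithTop ℕ∞) = (m : WithTop ℕ∞) + 1 := by push_cast; rfl
    rw [hcast, contDiffOn_succ_iff_deriv_of_isOpen hs]
    refine ⟨fun x hx => (h n x hx).differentiableAt.differentiableWithinAt, ?_, ?_⟩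
    · intro hm
      exact absurd hm (by exact_mod_cast (WithTop.natCast_ne_top m))
    · exact (ih (n + 1)).congr fun x hx => (h n x hx).deriv

lemma aesm_Ioc {f : ℝ → ℝ} {c d : ℝ} (hcd : c ≤ d) (h : ContinuousOn f (Ioo c d)) :
    AEStronglyMeasurable f (volume.restrict (Set.uIoc c d)) := by
  rw [uIoc_of_le hcd, ← MeasureTheory.Measure.restrict_congr_set Ioo_ae_eq_Ioc]
  exact h.aestronglyMeasurable measurableSet_Ioo

lemma ii_of_bound {f g : ℝ → ℝ} {c d : ℝ} (hcd : c ≤ d)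
    (hm : AEStronglyMeasurable f (volume.restrict (Set.uIoc c d)))
    (hg : IntervalIntegrable g volume c d)
    (h : ∀ t ∈ Ioc c d, |f t| ≤ g t) : IntervalIntegrable f volume c d := by
  refine hg.mono_fun' hm ?_
  filter_upwards [MeasureTheory.ae_restrict_mem measurableSet_uIoc] with t ht
  rw [uIoc_of_le hcd] at ht
  simpa [Real.norm_eq_abs] using h t ht

lemma ii_weight {β c d : ℝ} (hβ : -1 < β) :
    IntervalIntegrable (fun t => (d - t) ^ β) volume c d := by
  have h := (intervalIntegral.intervalIntegrable_rpow' (a := 0) (b := d - c) hβ).comp_sub_left d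
  simpa using h.symm


end aux2

lemma dg_zero (α p : ℝ) : dg α p 0 = gDens α p := rfl

noncomputable def rcoef (α : ℝ) (n : ℕ) : ℝ := ∏ i ∈ Finset.range n, (α - 1 - (i:ℝ))

lemma rcoef_succ (α : ℝ) (n : ℕ) : rcoef α (n+1) = rcoef α n * (α - 1 - (n:ℝ)) :=
  Finset.prod_range_succ _ _

noncomputable def F1fun (α p a : ℝ) (n : ℕ) (x t : ℝ) : ℝ :=
  rcoef α n * (x - t) ^ (α - 1 - (n:ℝ)) * gDens α p t

noncomputable def J1fun (α p a : ℝ) (n : ℕ) (x : ℝ) : ℝ :=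
  ∫ t in (0:ℝ)..a, F1fun α p a n x t

noncomputable def F2fun (α p a : ℝ) (n : ℕ) (x σ : ℝ) : ℝ :=
  (1 - σ) ^ (α - 1) * σ ^ n * dg α p n ((x - a) * σ + a)

noncomputable def J2fun (α p a : ℝ) (n : ℕ) (x : ℝ) : ℝ :=
  ∫ σ in (0:ℝ)..1, F2fun α p a n x σ

section
variable {α p : ℝ}

lemma J1_chain (hα0 : 0 < α) (hα1 : α < 1) (hp0 : 0 < p) (hp1 : p < 1)
    {a a' : ℝ} (ha : 0 < a) (haa' : a < a') (ha1 : a < 1) :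
    ∀ n : ℕ, ∀ x' : ℝ, a' < x' → HasDerivAt (J1fun α p a n) (J1fun α p a (n+1) x') x' := by
  have hsub0 : Icc (0:ℝ) a ⊆ Ico 0 1 := fun u hu => ⟨hu.1, lt_of_le_of_lt hu.2 ha1⟩
  obtain ⟨u₁, hu₁, hmax⟩ := isCompact_Icc.exists_isMaxOn (nonempty_Icc.2 ha.le)
    (((gDens_continuousOn hα0 hα1 hp0 hp1).mono hsub0).abs)
  set Mg := |gDens α p u₁| with hMgdef
  have hMg : ∀ u ∈ Icc (0:ℝ) a, |gDens α p u| ≤ Mg := fun u hu => hmax hu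
  -- uniform bound
  have hbound : ∀ (m : ℕ) (x : ℝ), a' < x → ∀ t ∈ Ioc (0:ℝ) a,
      ‖F1fun α p a m x t‖ ≤ |rcoef α m| * (a' - a) ^ (α - 1 - (m:ℝ)) * Mg := by
    intro m x hx t ht
    have hxt : 0 < x - t := by linarith [ht.2]
    have hda : 0 < a' - a := by linarith
    have he : α - 1 - (m:ℝ) ≤ 0 := by
      have : (0:ℝ) ≤ (m:ℝ) := Nat.cast_nonneg m
      linarith
    have h1 : (x - t) ^ (α - 1 - (m:ℝ)) ≤ (a' - a) ^ (α - 1 - (m:ℝ)) :=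
      Real.rpow_le_rpow_of_nonpos hda (by linarith [ht.2]) he
    have h2 : |gDens α p t| ≤ Mg := hMg t ⟨ht.1.le, ht.2⟩
    have hA : (0:ℝ) ≤ |rcoef α m| := abs_nonneg _
    have hB' : (0:ℝ) ≤ (a' - a) ^ (α - 1 - (m:ℝ)) := Real.rpow_nonneg hda.le _
    calc ‖F1fun α p a m x t‖
        = |rcoef α m| * (x - t) ^ (α - 1 - (m:ℝ)) * |gDens α p t| := by
          rw [Real.norm_eq_abs]
          simp only [F1fun]
          rw [abs_mul, abs_mul, abs_of_nonneg (Real.rpow_nonneg hxt.le _)]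
      _ ≤ |rcoef α m| * (a' - a) ^ (α - 1 - (m:ℝ)) * Mg :=
          mul_le_mul (mul_le_mul_of_nonneg_left h1 hA) h2 (abs_nonneg _)
            (mul_nonneg hA hB')
  -- measurability
  have hmeas : ∀ (m : ℕ) (x : ℝ), a' < x →
      AEStronglyMeasurable (F1fun α p a m x) (volume.restrict (Set.uIoc 0 a)) := by
    intro m x hx
    apply aesm_Ioc ha.le
    refine (ContinuousOn.mul continuousOn_const ?_).mul
      ((gDens_continuousOn hα0 hα1 hp0 hp1).mono
        (fun t ht => ⟨ht.1.le, lt_trans ht.2 ha1⟩))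
    intro t ht
    have hne : x - t ≠ 0 := ne_of_gt (by linarith [ht.2])
    exact (ContinuousAt.comp (Real.continuousAt_rpow_const _ _ (Or.inl hne))
      ((continuous_const.sub continuous_id).continuousAt)).continuousWithinAt
  have hint : ∀ (m : ℕ) (x : ℝ), a' < x → IntervalIntegrable (F1fun α p a m x) volume 0 a := by
    intro m x hx
    refine ii_of_bound ha.le (hmeas m x hx)
      (intervalIntegrable_const (c := |rcoef α m| * (a' - a) ^ (α - 1 - (m:ℝ)) * Mg)) ?_
    intro t ht
    rw [← Real.norm_eq_abs]
    exact hbound m x hx t ht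
  intro n x' hx'
  have hε : 0 < x' - a' := by linarith
  have hball : ∀ x ∈ Metric.ball x' (x' - a'), a' < x := by
    intro x hx
    have h := abs_lt.1 (by rw [← Real.dist_eq]; exact Metric.mem_ball.1 hx)
    linarith [h.1]
  refine (intervalIntegral.hasDerivAt_integral_of_dominated_loc_of_deriv_le
    (F := F1fun α p a n) (F' := F1fun α p a (n+1))
    (bound := fun _ => |rcoef α (n+1)| * (a' - a) ^ (α - 1 - ((n+1:ℕ):ℝ)) * Mg)
    (Metric.ball_mem_nhds x' hε) ?_ (hint n x' hx') (hmeas (n+1) x' hx') ?_ intervalIntegrable_const ?_).2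
  · filter_upwards [eventually_gt_nhds hx'] with x hx
    exact hmeas n x hx
  · refine ae_of_all _ fun t ht x hx => ?_
    exact hbound (n+1) x (hball x hx) t (by rwa [uIoc_of_le ha.le] at ht)
  · refine ae_of_all _ fun t ht x hx => ?_
    have ht' : t ∈ Ioc (0:ℝ) a := by rwa [uIoc_of_le ha.le] at ht
    have hax : a' < x := hball x hx
    have hxt : 0 < x - t := by linarith [ht'.2]
    have h1 := Real.hasDerivAt_rpow_const (x := x - t) (p := α - 1 - (n:ℝ)) (Or.inl hxt.ne')
    have h2 : HasDerivAt (fun y : ℝ => y - t) 1 x := (hasDerivAt_id x).sub_const t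
    have h3 := h1.comp x h2
    have h4 := (h3.const_mul (rcoef α n)).mul_const (gDens α p t)
    have h5 : F1fun α p a (n+1) x t
        = rcoef α n * ((α - 1 - (n:ℝ)) * (x - t) ^ (α - 1 - (n:ℝ) - 1) * 1) * gDens α p t := by
      simp only [F1fun, rcoef_succ]
      rw [show (α - 1 - ((n+1:ℕ):ℝ)) = α - 1 - (n:ℝ) - 1 by push_cast; ring]
      ring
    rw [h5]
    exact h4

lemma J2_chain (hα0 : 0 < α) (hα1 : α < 1) (hp0 : 0 < p) (hp1 : p < 1)
    {a a' b : ℝ} (ha : 0 < a) (haa' : a < a') (hb1 : b < 1) :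
    ∀ n : ℕ, ∀ x' ∈ Ioo a' b, HasDerivAt (J2fun α p a n) (J2fun α p a (n+1) x') x' := by
  have hKsub : Icc a b ⊆ Ioo 0 1 := fun u hu =>
    ⟨lt_of_lt_of_le ha hu.1, lt_of_le_of_lt hu.2 hb1⟩
  intro n x' hx'
  obtain ⟨hx'a, hx'b⟩ := hx'
  have hab : a ≤ b := by linarith
  obtain ⟨u₁, _, hmax1⟩ := isCompact_Icc.exists_isMaxOn (nonempty_Icc.2 hab)
    (((dg_smooth hα0 hα1 hp0 hp1 n).continuousOn.mono hKsub).abs)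
  obtain ⟨u₂, _, hmax2⟩ := isCompact_Icc.exists_isMaxOn (nonempty_Icc.2 hab)
    (((dg_smooth hα0 hα1 hp0 hp1 (n+1)).continuousOn.mono hKsub).abs)
  set M1 := |dg α p n u₁| with hM1def
  set M2 := |dg α p (n+1) u₂| with hM2def
  have hmem : ∀ x : ℝ, a' < x → x < b → ∀ σ ∈ Ioc (0:ℝ) 1,
      ((x - a) * σ + a) ∈ Icc a b ∧ ((x - a) * σ + a) ∈ Ioo (0:ℝ) 1 := by
    intro x hx1 hx2 σ hσ
    have h1 : (0:ℝ) < x - a := by linarith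
    have h2 : a ≤ (x - a) * σ + a := by nlinarith [mul_nonneg h1.le hσ.1.le]
    have h3 : (x - a) * σ + a ≤ x := by nlinarith [mul_le_mul_of_nonneg_left hσ.2 h1.le]
    exact ⟨⟨h2, by linarith⟩, ⟨by linarith, by linarith⟩⟩
  have hbound : ∀ (m : ℕ) (Mm : ℝ), (∀ u ∈ Icc a b, |dg α p m u| ≤ Mm) →
      ∀ x : ℝ, a' < x → x < b → ∀ σ ∈ Ioc (0:ℝ) 1,
      ‖F2fun α p a m x σ‖ ≤ Mm * (1 - σ) ^ (α - 1) := by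
    intro m Mm hMm x hx1 hx2 σ hσ
    have hu := (hmem x hx1 hx2 σ hσ).1
    have h1σ : (0:ℝ) ≤ 1 - σ := by linarith [hσ.2]
    have hA : (0:ℝ) ≤ (1 - σ) ^ (α - 1) := Real.rpow_nonneg h1σ _
    have hB : |σ ^ m| ≤ 1 := by
      rw [abs_of_nonneg (pow_nonneg hσ.1.le m)]
      exact pow_le_one₀ hσ.1.le hσ.2
    have hC : |dg α p m ((x - a) * σ + a)| ≤ Mm := hMm _ hu
    calc ‖F2fun α p a m x σ‖
        = (1 - σ) ^ (α - 1) * |σ ^ m| * |dg α p m ((x - a) * σ + a)| := by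
          rw [Real.norm_eq_abs]
          simp only [F2fun]
          rw [abs_mul, abs_mul, abs_of_nonneg hA]
      _ ≤ (1 - σ) ^ (α - 1) * 1 * Mm :=
          mul_le_mul (mul_le_mul_of_nonneg_left hB hA) hC (abs_nonneg _)
            (by rw [mul_one]; exact hA)
      _ = Mm * (1 - σ) ^ (α - 1) := by ring
  have hmeas : ∀ (m : ℕ) (x : ℝ), a' < x → x < b →
      AEStronglyMeasurable (F2fun α p a m x) (volume.restrict (Set.uIoc 0 1)) := by
    intro m x hx1 hx2
    apply aesm_Ioc zero_le_one
    refine (ContinuousOn.mul ?_ (continuous_pow m).continuousOn).mul ?_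
    · intro σ hσ
      have hne : (1:ℝ) - σ ≠ 0 := ne_of_gt (by linarith [hσ.2])
      exact (ContinuousAt.comp (Real.continuousAt_rpow_const _ _ (Or.inl hne))
        ((continuous_const.sub continuous_id).continuousAt)).continuousWithinAt
    · refine ContinuousOn.comp ((dg_smooth hα0 hα1 hp0 hp1 m).continuousOn) ?_ ?_
      · exact ((continuous_const.mul continuous_id).add continuous_const).continuousOn
      · intro σ hσ
        exact (hmem x hx1 hx2 σ ⟨hσ.1, hσ.2.le⟩).2
  have hw : IntervalIntegrable (fun σ : ℝ => (1 - σ) ^ (α - 1)) volume 0 1 :=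
    ii_weight (by linarith)
  have hint : ∀ (m : ℕ) (Mm : ℝ), (∀ u ∈ Icc a b, |dg α p m u| ≤ Mm) →
      ∀ x : ℝ, a' < x → x < b → IntervalIntegrable (F2fun α p a m x) volume 0 1 := by
    intro m Mm hMm x hx1 hx2
    refine ii_of_bound zero_le_one (hmeas m x hx1 hx2) (hw.const_mul Mm) ?_
    intro σ hσ
    rw [← Real.norm_eq_abs]
    exact hbound m Mm hMm x hx1 hx2 σ hσ
  have hε : 0 < min (x' - a') (b - x') := lt_min (by linarith) (by linarith)
  have hball : ∀ x ∈ Metric.ball x' (min (x' - a') (b - x')), a' < x ∧ x < b := by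
    intro x hx
    have h := abs_lt.1 (by rw [← Real.dist_eq]; exact Metric.mem_ball.1 hx)
    constructor
    · have := min_le_left (x' - a') (b - x'); linarith [h.1]
    · have := min_le_right (x' - a') (b - x'); linarith [h.2]
  refine (intervalIntegral.hasDerivAt_integral_of_dominated_loc_of_deriv_le
    (F := F2fun α p a n) (F' := F2fun α p a (n+1))
    (bound := fun σ => M2 * (1 - σ) ^ (α - 1))
    (Metric.ball_mem_nhds x' hε) ?_ (hint n M1 (fun u hu => hmax1 hu) x' hx'a hx'b)
    (hmeas (n+1) x' hx'a hx'b) ?_ (hw.const_mul M2) ?_).2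
  · filter_upwards [eventually_gt_nhds hx'a, eventually_lt_nhds hx'b] with x h1 h2
    exact hmeas n x h1 h2
  · refine ae_of_all _ fun σ hσ x hx => ?_
    obtain ⟨h1, h2⟩ := hball x hx
    exact hbound (n+1) M2 (fun u hu => hmax2 hu) x h1 h2 σ
      (by rwa [uIoc_of_le zero_le_one] at hσ)
  · refine ae_of_all _ fun σ hσ x hx => ?_
    have hσ' : σ ∈ Ioc (0:ℝ) 1 := by rwa [uIoc_of_le zero_le_one] at hσ
    obtain ⟨h1, h2⟩ := hball x hx
    have hu := (hmem x h1 h2 σ hσ').2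
    have haff : HasDerivAt (fun y : ℝ => (y - a) * σ + a) σ x := by
      simpa using (((hasDerivAt_id x).sub_const a).mul_const σ).add_const a
    have hdg := (dg_hasDerivAt hα0 hα1 hp0 hp1 n hu).comp x haff
    have h4 := hdg.const_mul ((1 - σ) ^ (α - 1) * σ ^ n)
    have h5 : F2fun α p a (n+1) x σ
        = (1 - σ) ^ (α - 1) * σ ^ n * (dg α p (n+1) ((x - a) * σ + a) * σ) := by
      simp only [F2fun, pow_succ]
      ring
    rw [h5]
    exact h4

lemma GDist_eq (hα0 : 0 < α) (hα1 : α < 1) (hp0 : 0 < p) (hp1 : p < 1)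
    {a a' b : ℝ} (ha : 0 < a) (haa' : a < a') (hb1 : b < 1)
    {x : ℝ} (hx : x ∈ Ioo a' b) :
    GDist α p x = J1fun α p a 0 x + (x - a) ^ α * J2fun α p a 0 x := by
  obtain ⟨hxa', hxb⟩ := hx
  have hax : a < x := lt_trans haa' hxa'
  have hx1 : x < 1 := lt_trans hxb hb1
  have hx0 : 0 < x := lt_trans ha hax
  have hb0 : (0:ℝ) ≤ b := by linarith
  have hsubb : Icc (0:ℝ) b ⊆ Ico 0 1 := fun u hu => ⟨hu.1, lt_of_le_of_lt hu.2 hb1⟩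
  obtain ⟨u₁, _, hmax⟩ := isCompact_Icc.exists_isMaxOn (nonempty_Icc.2 hb0)
    (((gDens_continuousOn hα0 hα1 hp0 hp1).mono hsubb).abs)
  set Mg := |gDens α p u₁| with hMgdef
  have hMg : ∀ u ∈ Icc (0:ℝ) b, |gDens α p u| ≤ Mg := fun u hu => hmax hu
  have hkcont : ∀ {c d : ℝ}, d ≤ x → Ioo c d ⊆ Ico (0:ℝ) 1 →
      ContinuousOn (fun t => (x - t) ^ (α - 1) * gDens α p t) (Ioo c d) := by
    intro c d hdx hsub'
    refine ContinuousOn.mul ?_ ((gDens_continuousOn hα0 hα1 hp0 hp1).mono hsub')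
    intro t ht
    have hne : x - t ≠ 0 := ne_of_gt (by linarith [ht.2])
    exact (ContinuousAt.comp (Real.continuousAt_rpow_const _ _ (Or.inl hne))
      ((continuous_const.sub continuous_id).continuousAt)).continuousWithinAt
  have h1 : IntervalIntegrable (fun t => (x - t) ^ (α - 1) * gDens α p t) volume 0 a := by
    refine ii_of_bound ha.le
      (aesm_Ioc ha.le (hkcont hax.le (fun t ht => ⟨ht.1.le, by linarith [ht.2]⟩)))
      (intervalIntegrable_const (c := (x - a) ^ (α - 1) * Mg)) ?_
    intro t ht
    have hxt : 0 < x - t := by linarith [ht.2]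
    have hxa : 0 < x - a := by linarith
    have h1' : (x - t) ^ (α - 1) ≤ (x - a) ^ (α - 1) :=
      Real.rpow_le_rpow_of_nonpos hxa (by linarith [ht.2]) (by linarith)
    have h2' : |gDens α p t| ≤ Mg := hMg t ⟨ht.1.le, by linarith [ht.2]⟩
    calc |(x - t) ^ (α - 1) * gDens α p t|
        = (x - t) ^ (α - 1) * |gDens α p t| := by
          rw [abs_mul, abs_of_nonneg (Real.rpow_nonneg hxt.le _)]
      _ ≤ (x - a) ^ (α - 1) * Mg :=
          mul_le_mul h1' h2' (abs_nonneg _) (Real.rpow_nonneg hxa.le _)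
  have h2 : IntervalIntegrable (fun t => (x - t) ^ (α - 1) * gDens α p t) volume a x := by
    refine ii_of_bound hax.le
      (aesm_Ioc hax.le (hkcont le_rfl
        (fun t ht => ⟨le_of_lt (lt_trans ha ht.1), lt_trans ht.2 hx1⟩)))
      ((ii_weight (by linarith : (-1:ℝ) < α - 1)).const_mul Mg) ?_
    intro t ht
    have hxt : 0 ≤ x - t := by linarith [ht.2]
    calc |(x - t) ^ (α - 1) * gDens α p t|
        = (x - t) ^ (α - 1) * |gDens α p t| := by
          rw [abs_mul, abs_of_nonneg (Real.rpow_nonneg hxt _)]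
      _ ≤ (x - t) ^ (α - 1) * Mg :=
          mul_le_mul_of_nonneg_left
            (hMg t ⟨by linarith [ht.1], by linarith [ht.2]⟩)
            (Real.rpow_nonneg hxt _)
      _ = Mg * (x - t) ^ (α - 1) := mul_comm _ _
  have hsplit := intervalIntegral.integral_add_adjacent_intervals h1 h2
  have hG : GDist α p x = (∫ t in (0:ℝ)..a, (x - t) ^ (α - 1) * gDens α p t)
      + ∫ t in a..x, (x - t) ^ (α - 1) * gDens α p t := by
    rw [show GDist α p x = ∫ t in (0:ℝ)..x, (x - t) ^ (α - 1) * gDens α p t from rfl,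
      ← hsplit]
  have hJ1 : J1fun α p a 0 x = ∫ t in (0:ℝ)..a, (x - t) ^ (α - 1) * gDens α p t := by
    simp [J1fun, F1fun, rcoef]
  have hxa0 : x - a ≠ 0 := ne_of_gt (by linarith)
  have e3 : (x - a) • (∫ σ in (0:ℝ)..1,
        (x - ((x - a) * σ + a)) ^ (α - 1) * gDens α p ((x - a) * σ + a))
      = ∫ t in (x - a) * 0 + a..(x - a) * 1 + a, (x - t) ^ (α - 1) * gDens α p t :=
    intervalIntegral.smul_integral_comp_mul_add (a := 0) (b := 1)
      (fun t => (x - t) ^ (α - 1) * gDens α p t) (x - a) a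
  rw [show (x - a) * 0 + a = a by ring, show (x - a) * 1 + a = x by ring] at e3
  have hinner : (∫ σ in (0:ℝ)..1,
        (x - ((x - a) * σ + a)) ^ (α - 1) * gDens α p ((x - a) * σ + a))
      = (x - a) ^ (α - 1) * J2fun α p a 0 x := by
    have hc : (x - a) ^ (α - 1) * J2fun α p a 0 x
        = ∫ σ in (0:ℝ)..1, (x - a) ^ (α - 1) * F2fun α p a 0 x σ :=
      (intervalIntegral.integral_const_mul _ _).symm
    rw [hc]
    apply intervalIntegral.integral_congr
    intro σ hσ
    rw [uIcc_of_le zero_le_one] at hσ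
    have h1σ : (0:ℝ) ≤ 1 - σ := by linarith [hσ.2]
    show (x - ((x - a) * σ + a)) ^ (α - 1) * gDens α p ((x - a) * σ + a)
      = (x - a) ^ (α - 1) * F2fun α p a 0 x σ
    rw [show x - ((x - a) * σ + a) = (x - a) * (1 - σ) by ring,
      Real.mul_rpow (by linarith : (0:ℝ) ≤ x - a) h1σ]
    simp only [F2fun, pow_zero, dg_zero]
    ring
  calc GDist α p x
      = (∫ t in (0:ℝ)..a, (x - t) ^ (α - 1) * gDens α p t)
        + ∫ t in a..x, (x - t) ^ (α - 1) * gDens α p t := hG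
    _ = J1fun α p a 0 x + (x - a) • ((x - a) ^ (α - 1) * J2fun α p a 0 x) := by
        rw [← e3, hinner, ← hJ1]
    _ = J1fun α p a 0 x + (x - a) ^ α * J2fun α p a 0 x := by
        rw [smul_eq_mul]
        have h := Real.rpow_add_one hxa0 (α - 1)
        rw [show α - 1 + 1 = α by ring] at h
        rw [h]
        ring

theorem GDist_smooth (α p : ℝ) (hα0 : 0 < α) (hα1 : α < 1)
    (hp0 : 0 < p) (hp1 : p < 1) :
    ContDiffOn ℝ (⊤ : ℕ∞) (GDist α p) (Set.Ioo 0 1) := by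
  intro x₀ hx₀
  obtain ⟨hx0, hx1⟩ := hx₀
  have ha : 0 < x₀ / 2 := by linarith
  have haa' : x₀ / 2 < 3 * x₀ / 4 := by linarith
  have ha1 : x₀ / 2 < 1 := by linarith
  have hb1 : (x₀ + 1) / 2 < 1 := by linarith
  have hchain1 : ∀ n : ℕ, ∀ x ∈ Ioo (3 * x₀ / 4) ((x₀ + 1) / 2),
      HasDerivAt (J1fun α p (x₀/2) n) (J1fun α p (x₀/2) (n+1) x) x :=
    fun n x hx => J1_chain hα0 hα1 hp0 hp1 ha haa' ha1 n x hx.1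
  have hchain2 := J2_chain hα0 hα1 hp0 hp1 (a' := 3 * x₀ / 4) (b := (x₀ + 1) / 2) ha haa' hb1
  have hs1 := contDiffOn_of_hasDerivAt_chain isOpen_Ioo hchain1
  have hs2 := contDiffOn_of_hasDerivAt_chain isOpen_Ioo hchain2
  have hpow : ContDiffOn ℝ (⊤:ℕ∞) (fun x : ℝ => (x - x₀/2) ^ α)
      (Ioo (3 * x₀ / 4) ((x₀ + 1) / 2)) := by
    intro x hx
    have hne : x - x₀/2 ≠ 0 := ne_of_gt (by linarith [hx.1])
    exact ((Real.contDiffAt_rpow_const_of_ne (x := x - x₀/2) hne).comp x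
      (contDiffAt_id.sub contDiffAt_const)).contDiffWithinAt
  have hΦ := hs1.add (hpow.mul hs2)
  have hG : ContDiffOn ℝ (⊤:ℕ∞) (GDist α p) (Ioo (3 * x₀ / 4) ((x₀ + 1) / 2)) :=
    hΦ.congr fun x hx => GDist_eq hα0 hα1 hp0 hp1 ha haa' hb1 hx
  exact (hG.contDiffAt (isOpen_Ioo.mem_nhds ⟨by linarith, by linarith⟩)).contDiffWithinAt

end
end

section
/- Let 0 < α < 1 and 0 < p < 1. Define g_{α,p}(t) = (sin(απ)/π) · (1−p) t^α / [p²(1−t)^{2α} + (1−p)² t^{2α} + 2p(1−p) t^α (1−t)^α cos(απ)] for 0 < t < 1, and G_{α,p}(x) = ∫₀ˣ (x−t)^{α−1} g_{α,p}(t) dt. Then the derivative G_{α,p}′ satisfies the asymptotic G_{α,p}′(x) / [ (sin(απ)/π) · ((1−p)/p²) · (α Γ(α)²/Γ(2α)) · x^{2α−1} ] → 1 as x → 0+. -/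
open MeasureTheory Real Set Filter

noncomputable def dDen (α p t : ℝ) : ℝ :=
  p ^ 2 * (1 - t) ^ (2 * α) + (1 - p) ^ 2 * t ^ (2 * α)
    + 2 * p * (1 - p) * t ^ α * (1 - t) ^ α * Real.cos (α * Real.pi)

noncomputable def dDen' (α p t : ℝ) : ℝ :=
  p ^ 2 * (2 * α * (1 - t) ^ (2 * α - 1) * (-1))
    + (1 - p) ^ 2 * (2 * α * t ^ (2 * α - 1))
    + 2 * p * (1 - p) * Real.cos (α * Real.pi) *
        (α * t ^ (α - 1) * (1 - t) ^ α + t ^ α * (α * (1 - t) ^ (α - 1) * (-1)))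

noncomputable def gK (α p : ℝ) : ℝ := Real.sin (α * Real.pi) / Real.pi * (1 - p)

noncomputable def gD' (α p t : ℝ) : ℝ :=
  gK α p * (α * t ^ (α - 1) * dDen α p t - t ^ α * dDen' α p t) / (dDen α p t) ^ 2

lemma gDens_eq (α p t : ℝ) : gDens α p t = gK α p * t ^ α / dDen α p t := by
  unfold gDens gK dDen; ring


lemma rpow_add_eq {t : ℝ} (ht : 0 < t) {a b c : ℝ} (h : a + b = c) :
    t ^ a * t ^ b = t ^ c := by rw [← Real.rpow_add ht, h]

lemma rpow_mul_self_eq {t : ℝ} (ht : 0 < t) {a c : ℝ} (h : a + 1 = c) :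
    t ^ a * t = t ^ c := by
  calc t ^ a * t = t ^ a * t ^ (1:ℝ) := by rw [Real.rpow_one]
    _ = t ^ c := rpow_add_eq ht h

lemma sin_api_pos {α : ℝ} (hα0 : 0 < α) (hα1 : α < 1) : 0 < Real.sin (α * Real.pi) :=
  Real.sin_pos_of_pos_of_lt_pi (by positivity) (by nlinarith [Real.pi_pos])

lemma cos_api_gt {α : ℝ} (hα0 : 0 < α) (hα1 : α < 1) : -1 < Real.cos (α * Real.pi) := by
  nlinarith [sin_api_pos hα0 hα1, Real.sin_sq_add_cos_sq (α * Real.pi)]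

lemma dDen_pos {α p : ℝ} (hα0 : 0 < α) (hα1 : α < 1) (hp0 : 0 < p) (hp1 : p < 1)
    {t : ℝ} (ht0 : 0 < t) (ht1 : t < 1) : 0 < dDen α p t := by
  have h1t : (0:ℝ) < 1 - t := by linarith
  have hA : 0 < (1 - t) ^ α := Real.rpow_pos_of_pos h1t α
  have hB : 0 < t ^ α := Real.rpow_pos_of_pos ht0 α
  have h2a : (1 - t) ^ (2 * α) = ((1 - t) ^ α) ^ 2 := by
    rw [show 2 * α = α + α by ring, Real.rpow_add h1t]; ring
  have h2b : t ^ (2 * α) = (t ^ α) ^ 2 := by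
    rw [show 2 * α = α + α by ring, Real.rpow_add ht0]; ring
  have key : dDen α p t = (p * (1 - t) ^ α - (1 - p) * t ^ α) ^ 2
      + 2 * p * (1 - p) * (1 - t) ^ α * t ^ α * (1 + Real.cos (α * Real.pi)) := by
    unfold dDen; rw [h2a, h2b]; ring
  have hc := cos_api_gt hα0 hα1
  nlinarith [sq_nonneg (p * (1 - t) ^ α - (1 - p) * t ^ α),
    mul_pos (mul_pos (mul_pos (mul_pos (by linarith : (0:ℝ) < 2 * p) (by linarith : (0:ℝ) < 1 - p)) hA) hB) (by linarith : (0:ℝ) < 1 + Real.cos (α * Real.pi))]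

lemma hasDerivAt_dDen {α p t : ℝ} (ht0 : 0 < t) (ht1 : t < 1) :
    HasDerivAt (dDen α p) (dDen' α p t) t := by
  have h1t : (1:ℝ) - t ≠ 0 := by intro h; linarith [h]
  have ht0' : t ≠ 0 := ne_of_gt ht0
  have hu : HasDerivAt (fun t : ℝ => 1 - t) (-1) t := by
    simpa using (hasDerivAt_id t).const_sub 1
  have h1 : HasDerivAt (fun t : ℝ => (1 - t) ^ (2 * α))
      (2 * α * (1 - t) ^ (2 * α - 1) * (-1)) t :=
    (Real.hasDerivAt_rpow_const (Or.inl h1t)).comp t hu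
  have h2 : HasDerivAt (fun t : ℝ => t ^ (2 * α)) (2 * α * t ^ (2 * α - 1)) t :=
    Real.hasDerivAt_rpow_const (Or.inl ht0')
  have h3 : HasDerivAt (fun t : ℝ => t ^ α) (α * t ^ (α - 1)) t :=
    Real.hasDerivAt_rpow_const (Or.inl ht0')
  have h4 : HasDerivAt (fun t : ℝ => (1 - t) ^ α) (α * (1 - t) ^ (α - 1) * (-1)) t :=
    (Real.hasDerivAt_rpow_const (Or.inl h1t)).comp t hu
  have H := ((h1.const_mul (p ^ 2)).add (h2.const_mul ((1 - p) ^ 2))).add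
    ((h3.mul h4).const_mul (2 * p * (1 - p) * Real.cos (α * Real.pi)))
  have hfun : (fun t : ℝ => p ^ 2 * (1 - t) ^ (2 * α) + (1 - p) ^ 2 * t ^ (2 * α)
      + 2 * p * (1 - p) * Real.cos (α * Real.pi) * (t ^ α * (1 - t) ^ α)) = dDen α p := by
    funext t; unfold dDen; ring
  replace H : HasDerivAt (fun t : ℝ => p ^ 2 * (1 - t) ^ (2 * α) + (1 - p) ^ 2 * t ^ (2 * α)
      + 2 * p * (1 - p) * Real.cos (α * Real.pi) * (t ^ α * (1 - t) ^ α)) _ t := H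
  rw [hfun] at H
  convert H using 1
  all_goals (unfold dDen'; ring)

lemma hasDerivAt_gDens {α p : ℝ} (hα0 : 0 < α) (hα1 : α < 1) (hp0 : 0 < p) (hp1 : p < 1)
    {t : ℝ} (ht0 : 0 < t) (ht1 : t < 1) :
    HasDerivAt (gDens α p) (gD' α p t) t := by
  have hD := hasDerivAt_dDen (α := α) (p := p) ht0 ht1
  have hDpos := dDen_pos hα0 hα1 hp0 hp1 ht0 ht1
  have h3 : HasDerivAt (fun t : ℝ => t ^ α) (α * t ^ (α - 1)) t :=
    Real.hasDerivAt_rpow_const (Or.inl (ne_of_gt ht0))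
  have H := (h3.const_mul (gK α p)).div hD (ne_of_gt hDpos)
  have hfun : (fun t : ℝ => gK α p * t ^ α / dDen α p t) = gDens α p := by
    funext t; rw [gDens_eq]
  replace H : HasDerivAt (fun t : ℝ => gK α p * t ^ α / dDen α p t) _ t := H
  rw [hfun] at H
  convert H using 1
  all_goals (unfold gD'; ring)

lemma tendsto_dDen {α p : ℝ} (hα0 : 0 < α) (hα1 : α < 1) :
    Filter.Tendsto (dDen α p) (nhdsWithin 0 (Set.Ioi 0)) (nhds (p ^ 2)) := by
  have cA : ContinuousAt (fun t : ℝ => 1 - t) 0 := by fun_prop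
  have c1 : ContinuousAt (fun t : ℝ => (1 - t) ^ (2 * α)) 0 :=
    cA.rpow_const (Or.inl (by norm_num))
  have c2 : ContinuousAt (fun t : ℝ => t ^ (2 * α)) 0 :=
    continuousAt_id.rpow_const (Or.inr (by positivity))
  have c3 : ContinuousAt (fun t : ℝ => t ^ α) 0 :=
    continuousAt_id.rpow_const (Or.inr hα0.le)
  have c4 : ContinuousAt (fun t : ℝ => (1 - t) ^ α) 0 :=
    cA.rpow_const (Or.inl (by norm_num))
  have hc : ContinuousAt (dDen α p) 0 := by
    unfold dDen
    exact ((continuousAt_const.mul c1).add (continuousAt_const.mul c2)).add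
      (((continuousAt_const.mul c3).mul c4).mul continuousAt_const)
  have hval : dDen α p 0 = p ^ 2 := by
    unfold dDen
    rw [Real.zero_rpow (by positivity : (2:ℝ) * α ≠ 0), Real.zero_rpow (ne_of_gt hα0)]
    norm_num
  have h2 : Filter.Tendsto (dDen α p) (nhdsWithin 0 (Set.Ioi 0)) (nhds (dDen α p 0)) :=
    hc.tendsto.mono_left nhdsWithin_le_nhds
  rwa [hval] at h2

lemma tendsto_u {α p : ℝ} (hα0 : 0 < α) (hα1 : α < 1) (hp0 : 0 < p) (hp1 : p < 1) :
    Filter.Tendsto (fun t => gDens α p t / t ^ α) (nhdsWithin 0 (Set.Ioi 0))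
      (nhds (gK α p / p ^ 2)) := by
  have h : ∀ t ∈ Set.Ioi (0:ℝ), gK α p / dDen α p t = gDens α p t / t ^ α := by
    intro t ht
    rw [gDens_eq, div_right_comm, mul_div_assoc,
      div_self (ne_of_gt (Real.rpow_pos_of_pos ht α)), mul_one]
  have hT : Filter.Tendsto (fun t => gK α p / dDen α p t) (nhdsWithin 0 (Set.Ioi 0))
      (nhds (gK α p / p ^ 2)) :=
    tendsto_const_nhds.div (tendsto_dDen hα0 hα1) (by positivity)
  exact hT.congr' (eventually_nhdsWithin_of_forall h)

lemma tendsto_t_dDen' {α p : ℝ} (hα0 : 0 < α) (hα1 : α < 1) :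
    Filter.Tendsto (fun t => t * dDen' α p t) (nhdsWithin 0 (Set.Ioi 0)) (nhds 0) := by
  have cA : ContinuousAt (fun t : ℝ => 1 - t) 0 := by fun_prop
  -- continuous pieces at 0
  have c1 : ContinuousAt (fun t : ℝ => (1 - t) ^ (2 * α - 1)) 0 :=
    cA.rpow_const (Or.inl (by norm_num))
  have c4 : ContinuousAt (fun t : ℝ => (1 - t) ^ α) 0 :=
    cA.rpow_const (Or.inl (by norm_num))
  have c5 : ContinuousAt (fun t : ℝ => (1 - t) ^ (α - 1)) 0 :=
    cA.rpow_const (Or.inl (by norm_num))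
  have c2 : ContinuousAt (fun t : ℝ => t ^ (2 * α)) 0 :=
    continuousAt_id.rpow_const (Or.inr (by positivity))
  have c3 : ContinuousAt (fun t : ℝ => t ^ α) 0 :=
    continuousAt_id.rpow_const (Or.inr hα0.le)
  have c6 : ContinuousAt (fun t : ℝ => t ^ (α + 1)) 0 :=
    continuousAt_id.rpow_const (Or.inr (by positivity))
  -- the rewritten function, continuous at 0 with value 0
  have hg : ContinuousAt (fun t : ℝ =>
      p ^ 2 * (2 * α * ((1 - t) ^ (2 * α - 1) * t) * (-1))
        + (1 - p) ^ 2 * (2 * α * t ^ (2 * α))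
        + 2 * p * (1 - p) * Real.cos (α * Real.pi) *
            (α * (t ^ α) * (1 - t) ^ α + t ^ (α + 1) * (α * (1 - t) ^ (α - 1) * (-1)))) 0 := by
    exact ((continuousAt_const.mul ((continuousAt_const.mul
        (c1.mul continuousAt_id)).mul continuousAt_const)).add
      (continuousAt_const.mul (continuousAt_const.mul c2))).add
      (continuousAt_const.mul (((continuousAt_const.mul c3).mul c4).add
        (c6.mul ((continuousAt_const.mul c5).mul continuousAt_const))))
  have hval : (p ^ 2 * (2 * α * ((1 - (0:ℝ)) ^ (2 * α - 1) * 0) * (-1))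
        + (1 - p) ^ 2 * (2 * α * (0:ℝ) ^ (2 * α))
        + 2 * p * (1 - p) * Real.cos (α * Real.pi) *
            (α * ((0:ℝ) ^ α) * (1 - 0) ^ α + (0:ℝ) ^ (α + 1) * (α * (1 - (0:ℝ)) ^ (α - 1) * (-1)))) = 0 := by
    rw [Real.zero_rpow (by positivity : (2:ℝ) * α ≠ 0), Real.zero_rpow (ne_of_gt hα0),
      Real.zero_rpow (by positivity : α + 1 ≠ 0)]
    ring
  have hT : Filter.Tendsto (fun t : ℝ =>
      p ^ 2 * (2 * α * ((1 - t) ^ (2 * α - 1) * t) * (-1))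
        + (1 - p) ^ 2 * (2 * α * t ^ (2 * α))
        + 2 * p * (1 - p) * Real.cos (α * Real.pi) *
            (α * (t ^ α) * (1 - t) ^ α + t ^ (α + 1) * (α * (1 - t) ^ (α - 1) * (-1))))
      (nhdsWithin 0 (Set.Ioi 0)) (nhds 0) := by
    have h2 := hg.tendsto.mono_left (nhdsWithin_le_nhds (s := Set.Ioi (0:ℝ)))
    rwa [hval] at h2
  refine hT.congr' (eventually_nhdsWithin_of_forall ?_)
  intro t ht
  have ht0 : (0:ℝ) < t := ht
  have e1 : t ^ (2 * α - 1) * t = t ^ (2 * α) := rpow_mul_self_eq ht0 (by ring)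
  have e2 : t ^ (α - 1) * t = t ^ α := rpow_mul_self_eq ht0 (by ring)
  have e3 : t ^ α * t = t ^ (α + 1) := rpow_mul_self_eq ht0 (by ring)
  show _ = t * dDen' α p t
  rw [dDen', ← e1, ← e3, ← e2]
  ring

lemma tendsto_v {α p : ℝ} (hα0 : 0 < α) (hα1 : α < 1) (hp0 : 0 < p) (hp1 : p < 1) :
    Filter.Tendsto (fun t => t ^ (1 - α) * gD' α p t) (nhdsWithin 0 (Set.Ioi 0))
      (nhds (α * (gK α p / p ^ 2))) := by
  have hT : Filter.Tendsto (fun t => gK α p * (α * dDen α p t - t * dDen' α p t) / (dDen α p t) ^ 2)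
      (nhdsWithin 0 (Set.Ioi 0)) (nhds (gK α p * (α * p ^ 2 - 0) / (p ^ 2) ^ 2)) := by
    exact (tendsto_const_nhds.mul ((tendsto_const_nhds.mul (tendsto_dDen hα0 hα1)).sub
      (tendsto_t_dDen' hα0 hα1))).div (((tendsto_dDen hα0 hα1).pow 2)) (by positivity)
  have hval : gK α p * (α * p ^ 2 - 0) / (p ^ 2) ^ 2 = α * (gK α p / p ^ 2) := by
    field_simp; ring
  rw [hval] at hT
  refine hT.congr' (eventually_nhdsWithin_of_forall ?_)
  intro t ht
  have ht0 : (0:ℝ) < t := ht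
  have ea : t ^ (1 - α) * t ^ (α - 1) = (1:ℝ) := by
    rw [rpow_add_eq ht0 (by ring : (1-α)+(α-1) = (0:ℝ))]; exact Real.rpow_zero t
  have eb : t ^ (1 - α) * t ^ α = t := by
    rw [rpow_add_eq ht0 (by ring : (1-α)+α = (1:ℝ))]; exact Real.rpow_one t
  show _ = t ^ (1 - α) * gD' α p t
  rw [gD', ← mul_div_assoc]
  congr 1
  symm
  calc t ^ (1-α) * (gK α p * (α * t ^ (α-1) * dDen α p t - t ^ α * dDen' α p t))
      = gK α p * (α * (t^(1-α) * t^(α-1)) * dDen α p t - (t^(1-α) * t^α) * dDen' α p t) := by ring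
    _ = _ := by rw [ea, eb]; ring

lemma meas_gDens (α p : ℝ) : Measurable (gDens α p) := by
  unfold gDens; fun_prop

lemma meas_gD' (α p : ℝ) : Measurable (gD' α p) := by
  unfold gD' dDen dDen'; fun_prop

lemma real_betaIntegral {a b : ℝ} (ha : 0 < a) (hb : 0 < b) :
    ∫ s in (0:ℝ)..1, s ^ (a - 1) * (1 - s) ^ (b - 1) =
      Real.Gamma a * Real.Gamma b / Real.Gamma (a + b) := by
  have key := Complex.Gamma_mul_Gamma_eq_betaIntegral (s := (a:ℂ)) (t := (b:ℂ))
    (by simpa using ha) (by simpa using hb)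
  have hint : Complex.betaIntegral a b
      = ((∫ s in (0:ℝ)..1, s ^ (a - 1) * (1 - s) ^ (b - 1) : ℝ) : ℂ) := by
    rw [Complex.betaIntegral, ← intervalIntegral.integral_ofReal]
    apply intervalIntegral.integral_congr
    intro x hx
    have hx' : x ∈ Set.Icc (0:ℝ) 1 := by rwa [Set.uIcc_of_le (by norm_num)] at hx
    show (x:ℂ) ^ ((a:ℂ) - 1) * (1 - (x:ℂ)) ^ ((b:ℂ) - 1) = ((x ^ (a-1) * (1-x) ^ (b-1) : ℝ) : ℂ)
    rw [Complex.ofReal_mul, Complex.ofReal_cpow hx'.1, Complex.ofReal_cpow (by linarith [hx'.2])]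
    push_cast
    ring
  rw [hint] at key
  have keyR : Real.Gamma a * Real.Gamma b
      = Real.Gamma (a + b) * ∫ s in (0:ℝ)..1, s ^ (a - 1) * (1 - s) ^ (b - 1) := by
    have : ((Real.Gamma a * Real.Gamma b : ℝ) : ℂ)
        = ((Real.Gamma (a + b) * ∫ s in (0:ℝ)..1, s ^ (a - 1) * (1 - s) ^ (b - 1) : ℝ) : ℂ) := by
      push_cast
      rw [← Complex.Gamma_ofReal, ← Complex.Gamma_ofReal, ← Complex.Gamma_ofReal] at *
      convert key using 2
      push_cast; ring
    exact_mod_cast this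
  have hne : Real.Gamma (a + b) ≠ 0 := ne_of_gt (Real.Gamma_pos_of_pos (by linarith))
  rw [keyR]
  field_simp

lemma intInt_one_sub_rpow {α : ℝ} (hα0 : 0 < α) (c : ℝ) :
    IntervalIntegrable (fun s : ℝ => c * (1 - s) ^ (α - 1)) MeasureTheory.volume 0 1 := by
  have h : IntervalIntegrable (fun s : ℝ => s ^ (α - 1)) MeasureTheory.volume 0 1 :=
    intervalIntegral.intervalIntegrable_rpow' (by linarith)
  have h2 : IntervalIntegrable (fun s : ℝ => (1 - s) ^ (α - 1)) MeasureTheory.volume (1-(0:ℝ)) (1-(1:ℝ)) :=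
    h.comp_sub_left 1
  norm_num at h2
  exact h2.symm.const_mul c

noncomputable def FF (α p x s : ℝ) : ℝ := x ^ α * ((1 - s) ^ (α - 1) * gDens α p (x * s))

noncomputable def FF' (α p x s : ℝ) : ℝ :=
  (1 - s) ^ (α - 1) * (α * x ^ (α - 1) * gDens α p (x * s) + x ^ α * (s * gD' α p (x * s)))

lemma meas_FF (α p x : ℝ) : Measurable (FF α p x) := by
  unfold FF gDens; fun_prop

lemma meas_FF' (α p x : ℝ) : Measurable (FF' α p x) := by
  unfold FF' gDens gD' gK dDen dDen'; fun_prop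

lemma GDist_eq_s2 {α p x : ℝ} (hα0 : 0 < α) (hx : 0 < x) :
    GDist α p x = ∫ s in (0:ℝ)..1, FF α p x s := by
  have h1 := intervalIntegral.smul_integral_comp_mul_left (a := (0:ℝ)) (b := 1)
      (f := fun t => (x - t) ^ (α - 1) * gDens α p t) x
  simp only [mul_zero, mul_one] at h1
  rw [GDist, ← h1, smul_eq_mul, ← intervalIntegral.integral_const_mul]
  apply intervalIntegral.integral_congr
  intro s hs
  have hs' : s ∈ Set.Icc (0:ℝ) 1 := by rwa [Set.uIcc_of_le (by norm_num)] at hs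
  symm
  show FF α p x s = x * ((x - x * s) ^ (α - 1) * gDens α p (x * s))
  rw [FF, show x - x * s = x * (1 - s) by ring,
    Real.mul_rpow hx.le (by linarith [hs'.2] : (0:ℝ) ≤ 1 - s)]
  have h3 : x ^ (α - 1) * x = x ^ α := rpow_mul_self_eq hx (by ring)
  calc x ^ α * ((1-s) ^ (α-1) * gDens α p (x*s))
      = (x ^ (α-1) * x) * ((1-s) ^ (α-1) * gDens α p (x*s)) := by rw [h3]
    _ = x * (x ^ (α-1) * (1-s) ^ (α-1) * gDens α p (x*s)) := by ring

set_option maxHeartbeats 2000000 in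
theorem deriv_GDist_asymp (α p : ℝ) (hα0 : 0 < α) (hα1 : α < 1)
    (hp0 : 0 < p) (hp1 : p < 1) :
    Filter.Tendsto
      (fun x : ℝ => deriv (GDist α p) x /
        ((Real.sin (α * Real.pi) / Real.pi) * ((1 - p) / p ^ 2) *
          (α * Real.Gamma α ^ 2 / Real.Gamma (2 * α)) * x ^ (2 * α - 1)))
      (nhdsWithin 0 (Set.Ioi 0)) (nhds 1) := by
  have hπ := Real.pi_pos
  have hsin := sin_api_pos hα0 hα1
  have hgK : 0 < gK α p := mul_pos (div_pos hsin hπ) (by linarith)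
  set K' : ℝ := gK α p / p ^ 2 with hK'def
  have hK'pos : 0 < K' := div_pos hgK (by positivity)
  set M₁ : ℝ := |K'| + 1 with hM₁def
  set M₂ : ℝ := |α * K'| + 1 with hM₂def
  have hM₁pos : 0 < M₁ := by positivity
  have hM₂pos : 0 < M₂ := by positivity
  have hu := tendsto_u hα0 hα1 hp0 hp1
  have hv := tendsto_v hα0 hα1 hp0 hp1
  have hub : ∀ᶠ t in nhdsWithin 0 (Set.Ioi 0), |gDens α p t / t ^ α| < M₁ :=
    hu.abs.eventually_lt_const (by rw [hM₁def]; linarith [le_abs_self |K'|, abs_nonneg K'])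
  have hvb : ∀ᶠ t in nhdsWithin 0 (Set.Ioi 0), |t ^ (1 - α) * gD' α p t| < M₂ :=
    hv.abs.eventually_lt_const (by rw [hM₂def]; linarith [abs_nonneg (α * K')])
  obtain ⟨u₀, hu₀, hsub⟩ := mem_nhdsGT_iff_exists_Ioo_subset.mp (hub.and hvb)
  set δ : ℝ := min u₀ (1/2) with hδdef
  have hδ0 : 0 < δ := lt_min hu₀ (by norm_num)
  have hδhalf : δ ≤ 1/2 := min_le_right _ _
  have hsubδ : ∀ t, t ∈ Set.Ioo (0:ℝ) δ →
      |gDens α p t / t ^ α| < M₁ ∧ |t ^ (1 - α) * gD' α p t| < M₂ := by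
    intro t ht
    exact hsub ⟨ht.1, lt_of_lt_of_le ht.2 (min_le_left _ _)⟩
  -- pointwise bounds on (0, δ)
  have hgb : ∀ t, t ∈ Set.Ioo (0:ℝ) δ → |gDens α p t| ≤ M₁ * t ^ α := by
    intro t ht
    have h := (hsubδ t ht).1
    have htα : (0:ℝ) < t ^ α := Real.rpow_pos_of_pos ht.1 α
    rw [abs_div, abs_of_pos htα, div_lt_iff₀ htα] at h
    exact h.le
  have hg'b : ∀ t, t ∈ Set.Ioo (0:ℝ) δ → |gD' α p t| ≤ M₂ * t ^ (α - 1) := by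
    intro t ht
    have h := (hsubδ t ht).2
    have h1 : (0:ℝ) < t ^ (1 - α) := Real.rpow_pos_of_pos ht.1 _
    have h2 : (0:ℝ) < t ^ (α - 1) := Real.rpow_pos_of_pos ht.1 _
    have h3 : t ^ (1-α) * t ^ (α-1) = 1 := by
      rw [rpow_add_eq ht.1 (by ring : (1-α)+(α-1) = (0:ℝ))]; exact Real.rpow_zero t
    rw [abs_mul, abs_of_pos h1] at h
    have h4 : (t ^ (1-α) * |gD' α p t|) * t ^ (α-1) = |gD' α p t| := by
      rw [mul_comm (t ^ (1-α)) (|gD' α p t|), mul_assoc, h3, mul_one]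
    rw [← h4]
    exact mul_le_mul_of_nonneg_right h.le h2.le
  -- bound for FF'
  have hFF'b : ∀ x, x ∈ Set.Ioo (0:ℝ) δ → ∀ s, s ∈ Set.Ioc (0:ℝ) 1 →
      |FF' α p x s| ≤ (α * M₁ + M₂) * (x ^ (2*α - 1) * (1 - s) ^ (α - 1)) := by
    intro x hx s hs
    have hx0 := hx.1
    have hs0 := hs.1
    have hxs : x * s ∈ Set.Ioo (0:ℝ) δ :=
      ⟨mul_pos hx0 hs0, lt_of_le_of_lt (mul_le_of_le_one_right hx0.le hs.2) hx.2⟩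
    have h1s : (0:ℝ) ≤ 1 - s := by linarith [hs.2]
    have hg := hgb _ hxs
    have hg' := hg'b _ hxs
    have e1 : x ^ (α-1) * (x*s) ^ α = x ^ (2*α-1) * s ^ α := by
      rw [Real.mul_rpow hx0.le hs0.le, ← mul_assoc,
        rpow_add_eq hx0 (by ring : (α-1)+α = 2*α-1)]
    have e2 : x ^ α * (s * (x*s) ^ (α-1)) = x ^ (2*α-1) * s ^ α := by
      rw [Real.mul_rpow hx0.le hs0.le]
      calc x ^ α * (s * (x ^ (α-1) * s ^ (α-1)))
          = (x ^ α * x ^ (α-1)) * (s ^ (α-1) * s) := by ring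
        _ = x ^ (2*α-1) * s ^ α := by
            rw [rpow_add_eq hx0 (by ring : α+(α-1) = 2*α-1),
              rpow_mul_self_eq hs0 (by ring : (α-1)+1 = α)]
    have hsα1 : s ^ α ≤ 1 := Real.rpow_le_one hs0.le hs.2 hα0.le
    have hsα0 : (0:ℝ) ≤ s ^ α := (Real.rpow_pos_of_pos hs0 α).le
    have h1sm : (0:ℝ) ≤ (1-s) ^ (α-1) := Real.rpow_nonneg h1s _
    have hxpow : (0:ℝ) < x ^ (2*α-1) := Real.rpow_pos_of_pos hx0 _
    have hxa1 : (0:ℝ) ≤ x ^ (α-1) := (Real.rpow_pos_of_pos hx0 _).le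
    have hxa : (0:ℝ) ≤ x ^ α := (Real.rpow_pos_of_pos hx0 _).le
    rw [FF']
    calc |(1-s) ^ (α-1) * (α * x ^ (α-1) * gDens α p (x*s) + x ^ α * (s * gD' α p (x*s)))|
        = (1-s) ^ (α-1) * |α * x ^ (α-1) * gDens α p (x*s) + x ^ α * (s * gD' α p (x*s))| := by
          rw [abs_mul, abs_of_nonneg h1sm]
      _ ≤ (1-s) ^ (α-1) * (α * x ^ (α-1) * |gDens α p (x*s)| + x ^ α * (s * |gD' α p (x*s)|)) := by
          apply mul_le_mul_of_nonneg_left _ h1sm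
          calc |α * x ^ (α-1) * gDens α p (x*s) + x ^ α * (s * gD' α p (x*s))|
              ≤ |α * x ^ (α-1) * gDens α p (x*s)| + |x ^ α * (s * gD' α p (x*s))| := abs_add_le _ _
            _ = α * x ^ (α-1) * |gDens α p (x*s)| + x ^ α * (s * |gD' α p (x*s)|) := by
                rw [abs_mul, abs_mul, abs_mul, abs_mul,
                  abs_of_nonneg hα0.le, abs_of_nonneg hxa1, abs_of_nonneg hxa,
                  abs_of_nonneg hs0.le]
      _ ≤ (1-s) ^ (α-1) * (α * x ^ (α-1) * (M₁ * (x*s) ^ α) + x ^ α * (s * (M₂ * (x*s) ^ (α-1)))) := by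
          have hxsa : (0:ℝ) ≤ (x*s) ^ α := Real.rpow_nonneg (mul_pos hx0 hs0).le _
          have hxsa1 : (0:ℝ) ≤ (x*s) ^ (α-1) := Real.rpow_nonneg (mul_pos hx0 hs0).le _
          gcongr
      _ = (α*M₁ + M₂) * (x ^ (2*α-1) * (1-s) ^ (α-1)) * s ^ α := by
          rw [show α * x ^ (α-1) * (M₁ * (x*s) ^ α) = α*M₁*(x ^ (α-1) * (x*s) ^ α) by ring, e1,
            show x ^ α * (s * (M₂ * (x*s) ^ (α-1))) = M₂ * (x ^ α * (s * (x*s) ^ (α-1))) by ring, e2]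
          ring
      _ ≤ (α*M₁ + M₂) * (x ^ (2*α-1) * (1-s) ^ (α-1)) * 1 := by
          apply mul_le_mul_of_nonneg_left hsα1
          positivity
      _ = (α*M₁ + M₂) * (x ^ (2*α-1) * (1-s) ^ (α-1)) := mul_one _
  -- differentiation under the integral sign
  have hasD : ∀ x₀, x₀ ∈ Set.Ioo (0:ℝ) δ →
      HasDerivAt (fun y => ∫ s in (0:ℝ)..1, FF α p y s)
        (∫ s in (0:ℝ)..1, FF' α p x₀ s) x₀ := by
    intro x₀ hx₀
    set ε : ℝ := min (x₀/2) (δ - x₀) with hεdef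
    have hε0 : 0 < ε := lt_min (by linarith [hx₀.1]) (by linarith [hx₀.2])
    have hball : Metric.ball x₀ ε ⊆ Set.Ioo (0:ℝ) δ := by
      intro y hy
      rw [Metric.mem_ball, Real.dist_eq, abs_lt] at hy
      have h1 := min_le_left (x₀/2) (δ - x₀)
      have h2 := min_le_right (x₀/2) (δ - x₀)
      constructor
      · nlinarith [hy.1, hx₀.1]
      · nlinarith [hy.2]
    have hballlow : ∀ y ∈ Metric.ball x₀ ε, x₀/2 ≤ y := by
      intro y hy
      rw [Metric.mem_ball, Real.dist_eq, abs_lt] at hy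
      have h1 := min_le_left (x₀/2) (δ - x₀)
      nlinarith [hy.1]
    have hmeas : ∀ᶠ x in nhds x₀, AEStronglyMeasurable (FF α p x)
        (MeasureTheory.volume.restrict (Set.uIoc (0:ℝ) 1)) :=
      Filter.Eventually.of_forall fun x => (meas_FF α p x).aestronglyMeasurable
    have hx₀mem : x₀ ∈ Metric.ball x₀ ε := Metric.mem_ball_self hε0
    have hIoc : Set.uIoc (0:ℝ) 1 = Set.Ioc 0 1 := Set.uIoc_of_le (by norm_num)
    have hx₀1 : x₀ ≤ 1 := by linarith [hx₀.2, hδhalf]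
    have hint : IntervalIntegrable (FF α p x₀) MeasureTheory.volume 0 1 := by
      apply (intInt_one_sub_rpow hα0 M₁).mono_fun'
        ((meas_FF α p x₀).aestronglyMeasurable)
      rw [Filter.EventuallyLE, MeasureTheory.ae_restrict_iff' measurableSet_uIoc]
      apply MeasureTheory.ae_of_all
      intro s hs
      rw [hIoc] at hs
      have hs0 := hs.1
      have h1s : (0:ℝ) ≤ 1 - s := by linarith [hs.2]
      have h1sm : (0:ℝ) ≤ (1-s) ^ (α-1) := Real.rpow_nonneg h1s _
      have hxs0 : 0 < x₀ * s := mul_pos hx₀.1 hs0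
      have hxs : x₀ * s ∈ Set.Ioo (0:ℝ) δ :=
        ⟨hxs0, lt_of_le_of_lt (mul_le_of_le_one_right hx₀.1.le hs.2) hx₀.2⟩
      have hg := hgb _ hxs
      have hb1 : x₀ ^ α ≤ 1 := Real.rpow_le_one hx₀.1.le hx₀1 hα0.le
      have hb2 : (x₀ * s) ^ α ≤ 1 :=
        Real.rpow_le_one hxs0.le
          (le_trans (mul_le_of_le_one_right hx₀.1.le hs.2) hx₀1) hα0.le
      show ‖FF α p x₀ s‖ ≤ M₁ * (1-s) ^ (α-1)
      rw [FF, Real.norm_eq_abs, abs_mul, abs_mul,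
        abs_of_nonneg (Real.rpow_nonneg hx₀.1.le α), abs_of_nonneg h1sm]
      calc x₀ ^ α * ((1-s) ^ (α-1) * |gDens α p (x₀ * s)|)
          ≤ 1 * ((1-s) ^ (α-1) * (M₁ * (x₀*s) ^ α)) := by
            apply mul_le_mul hb1 _ (by positivity) (by norm_num)
            exact mul_le_mul_of_nonneg_left hg h1sm
        _ ≤ 1 * ((1-s) ^ (α-1) * (M₁ * 1)) := by
            have : (0:ℝ) ≤ (x₀*s) ^ α := Real.rpow_nonneg hxs0.le _
            gcongr
        _ = M₁ * (1-s) ^ (α-1) := by ring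
    have key := intervalIntegral.hasDerivAt_integral_of_dominated_loc_of_deriv_le
      (F := fun x s => FF α p x s) (F' := fun x s => FF' α p x s) (a := (0:ℝ)) (b := 1)
      (μ := MeasureTheory.volume)
      (bound := fun s => (α*M₁+M₂) * (2/x₀) * (1-s) ^ (α-1))
      (Metric.ball_mem_nhds x₀ hε0) hmeas hint ((meas_FF' α p x₀).aestronglyMeasurable) ?_ ?_ ?_
    · exact key.2
    · -- bound
      apply MeasureTheory.ae_of_all
      intro s hs x hx
      rw [hIoc] at hs
      have hxI : x ∈ Set.Ioo (0:ℝ) δ := hball hx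
      have hx0 := hxI.1
      have hb := hFF'b x hxI s hs
      have h1s : (0:ℝ) ≤ 1 - s := by linarith [hs.2]
      have h1sm : (0:ℝ) ≤ (1-s) ^ (α-1) := Real.rpow_nonneg h1s _
      have hx1 : x ≤ 1 := by linarith [hxI.2, hδhalf]
      have hxp : x ^ (2*α-1) ≤ 2/x₀ := by
        have e1 : x ^ (2*α-1) * x = x ^ (2*α) := rpow_mul_self_eq hx0 (by ring)
        have h2 : x ^ (2*α) ≤ 1 := Real.rpow_le_one hx0.le hx1 (by positivity)
        have e2 : x ^ (2*α-1) = x ^ (2*α) / x := by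
          rw [eq_div_iff hx0.ne']; exact e1
        rw [e2]
        have hhalf : x₀/2 ≤ x := hballlow x hx
        calc x ^ (2*α) / x ≤ 1 / x := by gcongr
          _ ≤ 1 / (x₀/2) := by
              apply one_div_le_one_div_of_le (by linarith [hx₀.1]) hhalf
          _ = 2/x₀ := by field_simp
      rw [Real.norm_eq_abs]
      calc |FF' α p x s| ≤ (α*M₁+M₂) * (x ^ (2*α-1) * (1-s) ^ (α-1)) := hb
        _ ≤ (α*M₁+M₂) * ((2/x₀) * (1-s) ^ (α-1)) := by
            have hc : (0:ℝ) ≤ α*M₁+M₂ := by positivity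
            apply mul_le_mul_of_nonneg_left _ hc
            exact mul_le_mul_of_nonneg_right hxp h1sm
        _ = (α*M₁+M₂) * (2/x₀) * (1-s) ^ (α-1) := by ring
    · exact intInt_one_sub_rpow hα0 _
    · -- differentiability in x
      apply MeasureTheory.ae_of_all
      intro s hs x hx
      rw [hIoc] at hs
      have hxI : x ∈ Set.Ioo (0:ℝ) δ := hball hx
      have hx0 := hxI.1
      have hs0 := hs.1
      have hxs0 : 0 < x * s := mul_pos hx0 hs0
      have hxs1 : x * s < 1 :=
        lt_of_le_of_lt (mul_le_of_le_one_right hx0.le hs.2) (by linarith [hxI.2, hδhalf])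
      have h1 : HasDerivAt (fun x : ℝ => x ^ α) (α * x ^ (α-1)) x :=
        Real.hasDerivAt_rpow_const (Or.inl hx0.ne')
      have h2 : HasDerivAt (fun x : ℝ => gDens α p (x * s)) (gD' α p (x * s) * s) x :=
        by have := (hasDerivAt_gDens hα0 hα1 hp0 hp1 hxs0 hxs1).comp x (hasDerivAt_mul_const (x := x) s); exact this
      have H := h1.mul (h2.const_mul ((1-s) ^ (α-1)))
      have hfun : (fun x : ℝ => x ^ α * ((1-s) ^ (α-1) * gDens α p (x * s)))
          = fun x : ℝ => FF α p x s := by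
        funext y; rw [FF]
      replace H : HasDerivAt (fun x : ℝ => x ^ α * ((1-s) ^ (α-1) * gDens α p (x * s))) _ x := H
      rw [hfun] at H
      refine H.congr_deriv ?_; symm
      show FF' α p x s = _
      rw [FF']
      ring
  have hIoc : Set.uIoc (0:ℝ) 1 = Set.Ioc 0 1 := Set.uIoc_of_le (by norm_num)
  have derivEq : ∀ x, x ∈ Set.Ioo (0:ℝ) δ →
      deriv (GDist α p) x = ∫ s in (0:ℝ)..1, FF' α p x s := by
    intro x hx
    have hEv : GDist α p =ᶠ[nhds x] fun y => ∫ s in (0:ℝ)..1, FF α p y s := by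
      filter_upwards [Ioi_mem_nhds hx.1] with y hy
      exact GDist_eq_s2 hα0 hy
    rw [hEv.deriv_eq]
    exact (hasD x hx).deriv
  have hDCT : Filter.Tendsto (fun x : ℝ => ∫ s in (0:ℝ)..1, x ^ (1-2*α) * FF' α p x s)
      (nhdsWithin 0 (Set.Ioi 0))
      (nhds (∫ s in (0:ℝ)..1, (1-s) ^ (α-1) * s ^ α * (2*α*K'))) := by
    refine intervalIntegral.tendsto_integral_filter_of_dominated_convergence
      (bound := fun s => (α*M₁+M₂) * (1-s) ^ (α-1)) ?_ ?_ ?_ ?_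
    · exact Filter.Eventually.of_forall fun x =>
        (((meas_FF' α p x).const_mul _)).aestronglyMeasurable
    · filter_upwards [Ioo_mem_nhdsGT_of_mem (Set.left_mem_Ico.mpr hδ0)] with x hx
      apply MeasureTheory.ae_of_all
      intro s hs
      rw [hIoc] at hs
      have hx0 := hx.1
      have key := hFF'b x hx s hs
      have e0 : x ^ (1-2*α) * x ^ (2*α-1) = 1 := by
        rw [rpow_add_eq hx0 (by ring : (1-2*α)+(2*α-1) = (0:ℝ))]; exact Real.rpow_zero x
      rw [Real.norm_eq_abs, abs_mul, abs_of_nonneg (Real.rpow_nonneg hx0.le (1-2*α))]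
      calc x ^ (1-2*α) * |FF' α p x s|
          ≤ x ^ (1-2*α) * ((α*M₁+M₂) * (x ^ (2*α-1) * (1-s) ^ (α-1))) :=
            mul_le_mul_of_nonneg_left key (Real.rpow_nonneg hx0.le _)
        _ = (x ^ (1-2*α) * x ^ (2*α-1)) * ((α*M₁+M₂) * (1-s) ^ (α-1)) := by ring
        _ = (α*M₁+M₂) * (1-s) ^ (α-1) := by rw [e0]; ring
    · exact intInt_one_sub_rpow hα0 _
    · apply MeasureTheory.ae_of_all
      intro s hs
      rw [hIoc] at hs
      have hs0 := hs.1
      have hxs_t : Filter.Tendsto (fun x : ℝ => x * s) (nhdsWithin 0 (Set.Ioi 0))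
          (nhdsWithin 0 (Set.Ioi 0)) := by
        apply tendsto_nhdsWithin_of_tendsto_nhds_of_eventually_within
        · have h0 : Filter.Tendsto (fun x : ℝ => x * s) (nhds 0) (nhds 0) := by
            simpa using (continuous_mul_right s).tendsto 0
          exact h0.mono_left nhdsWithin_le_nhds
        · exact eventually_nhdsWithin_of_forall fun x hx => mul_pos hx hs0
      have hU : Filter.Tendsto (fun x : ℝ => gDens α p (x*s) / (x*s) ^ α)
          (nhdsWithin 0 (Set.Ioi 0)) (nhds K') := hu.comp hxs_t
      have hV : Filter.Tendsto (fun x : ℝ => (x*s) ^ (1-α) * gD' α p (x*s))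
          (nhdsWithin 0 (Set.Ioi 0)) (nhds (α * K')) := hv.comp hxs_t
      have T : Filter.Tendsto (fun x : ℝ => (1-s) ^ (α-1) * s ^ α *
          (α * (gDens α p (x*s) / (x*s) ^ α) + (x*s) ^ (1-α) * gD' α p (x*s)))
          (nhdsWithin 0 (Set.Ioi 0))
          (nhds ((1-s) ^ (α-1) * s ^ α * (α * K' + α * K'))) :=
        tendsto_const_nhds.mul ((hU.const_mul α).add hV)
      have hlimval : (1-s) ^ (α-1) * s ^ α * (2*α*K')
          = (1-s) ^ (α-1) * s ^ α * (α * K' + α * K') := by ring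
      rw [hlimval]
      refine T.congr' (eventually_nhdsWithin_of_forall ?_)
      intro x hx
      have hx0 : (0:ℝ) < x := hx
      have hxs0 : 0 < x * s := mul_pos hx0 hs0
      have hxa : (0:ℝ) < x ^ α := Real.rpow_pos_of_pos hx0 _
      have hsa : (0:ℝ) < s ^ α := Real.rpow_pos_of_pos hs0 _
      have m1 : (x*s) ^ α = x ^ α * s ^ α := Real.mul_rpow hx0.le hs0.le
      have m2 : (x*s) ^ (1-α) = x ^ (1-α) * s ^ (1-α) := Real.mul_rpow hx0.le hs0.le
      have e2 : s ^ α * s ^ (1-α) = s := by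
        rw [rpow_add_eq hs0 (by ring : α+(1-α) = (1:ℝ))]; exact Real.rpow_one s
      have e4 : x ^ (1-2*α) * x ^ α = x ^ (1-α) := rpow_add_eq hx0 (by ring)
      have e5 : s ^ α / (x ^ α * s ^ α) = 1 / x ^ α := by
        field_simp
      have e6 : x ^ (1-2*α) * x ^ (α-1) = 1 / x ^ α := by
        rw [rpow_add_eq hx0 (show (1-2*α)+(α-1) = -α by ring), Real.rpow_neg hx0.le, one_div]
      show (1-s) ^ (α-1) * s ^ α *
          (α * (gDens α p (x*s) / (x*s) ^ α) + (x*s) ^ (1-α) * gD' α p (x*s))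
          = x ^ (1-2*α) * FF' α p x s
      rw [FF', m1, m2]
      calc (1-s) ^ (α-1) * s ^ α * (α * (gDens α p (x*s) / (x ^ α * s ^ α))
              + x ^ (1-α) * s ^ (1-α) * gD' α p (x*s))
          = (1-s) ^ (α-1) * (α * (s ^ α / (x ^ α * s ^ α)) * gDens α p (x*s)
              + (s ^ α * s ^ (1-α)) * (x ^ (1-α) * gD' α p (x*s))) := by ring
        _ = (1-s) ^ (α-1) * (α * (1 / x ^ α) * gDens α p (x*s)
              + s * (x ^ (1-α) * gD' α p (x*s))) := by rw [e5, e2]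
        _ = (1-s) ^ (α-1) * (α * (x ^ (1-2*α) * x ^ (α-1)) * gDens α p (x*s)
              + s * ((x ^ (1-2*α) * x ^ α) * gD' α p (x*s))) := by rw [e6, e4]
        _ = x ^ (1-2*α) * ((1-s) ^ (α-1) * (α * x ^ (α-1) * gDens α p (x*s)
              + x ^ α * (s * gD' α p (x*s)))) := by ring
  -- the Beta integral value
  have hΓ2α : (0:ℝ) < Real.Gamma (2*α) := Real.Gamma_pos_of_pos (by positivity)
  have hΓα : (0:ℝ) < Real.Gamma α := Real.Gamma_pos_of_pos hα0
  have hB' : ∫ s in (0:ℝ)..1, s ^ α * (1-s) ^ (α-1)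
      = Real.Gamma (α+1) * Real.Gamma α / Real.Gamma (α+1+α) := by
    have h := real_betaIntegral (a := α+1) (b := α) (by linarith) hα0
    rw [show α+1-1 = α by ring] at h
    exact h
  set Cst : ℝ := (Real.sin (α*Real.pi)/Real.pi) * ((1-p)/p^2)
      * (α * Real.Gamma α ^ 2 / Real.Gamma (2*α)) with hCstdef
  have hCstpos : 0 < Cst := by
    rw [hCstdef]
    exact mul_pos (mul_pos (div_pos hsin hπ) (div_pos (by linarith) (by positivity)))
      (div_pos (by positivity) hΓ2α)
  have hbeta : (∫ s in (0:ℝ)..1, (1-s) ^ (α-1) * s ^ α * (2*α*K')) = Cst := by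
    have hfe : (fun s : ℝ => (1-s) ^ (α-1) * s ^ α * (2*α*K'))
        = fun s : ℝ => (2*α*K') * (s ^ α * (1-s) ^ (α-1)) := by funext s; ring
    rw [hfe, intervalIntegral.integral_const_mul, hB']
    rw [Real.Gamma_add_one hα0.ne', show α+1+α = 2*α+1 by ring,
      Real.Gamma_add_one (by positivity : (2*α) ≠ 0)]
    rw [hCstdef, hK'def, gK]
    field_simp
  rw [hbeta] at hDCT
  have h1 := hDCT.div_const Cst
  rw [div_self hCstpos.ne'] at h1
  apply h1.congr'
  filter_upwards [Ioo_mem_nhdsGT_of_mem (Set.left_mem_Ico.mpr hδ0)] with x hx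
  rw [derivEq x hx, intervalIntegral.integral_const_mul]
  have hx0 := hx.1
  have e7 : x ^ (1-2*α) * x ^ (2*α-1) = 1 := by
    rw [rpow_add_eq hx0 (by ring : (1-2*α)+(2*α-1) = (0:ℝ))]; exact Real.rpow_zero x
  have hxp : (0:ℝ) < x ^ (2*α-1) := Real.rpow_pos_of_pos hx0 _
  rw [eq_div_iff (mul_ne_zero hCstpos.ne' hxp.ne')]
  calc x ^ (1-2*α) * (∫ s in (0:ℝ)..1, FF' α p x s) / Cst * (Cst * x ^ (2*α-1))
      = (x ^ (1-2*α) * x ^ (2*α-1)) * (Cst/Cst) * (∫ s in (0:ℝ)..1, FF' α p x s) := by ring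
    _ = ∫ s in (0:ℝ)..1, FF' α p x s := by rw [e7, div_self hCstpos.ne']; ring
end
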